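/- arXiv:1902.04648 — 3 statements merged into one kernel-verified Lean document; each statement's English description precedes it below -/
import Mathlib

section
/- Consider the one-dimensional locally conservative two-layer shallow-water shock conditions with constant total height: with left states h_{1,l}, h_{2,l} > 0, bulk momentum zero so that h_{1,l} u_{1,l} + h_{2,l} u_{2,l} = 0, shock speed S = u_{2,l} = -(h_{1,l}/h_{2,l}) u_{1,l}, densities 0 < ρ_1 < ρ_2, δ = (ρ_2 - ρ_1)/ρ_2, and g > 0. If S satisfies the Rankine-Hugoniot relation S(ρ_2 S + ρ_1 (h_{2,l}/h_{1,l}) S) = (1/2)(ρ_2 S² - ρ_1 (h_{2,l}²/h_{1,l}²) S²) + (ρ_2 - ρ_1) g h_{2,l}, then the squared Froude number Fr² = S²/(g δ h_{2,l}) equals 2(1-α)²/(1 - δ α(2-α)), where α = h_{2,l}/(h_{1,l} + h_{2,l}). -/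
/-!
Clearing `h₁²` from the Rankine–Hugoniot relation leaves the energy balance
`S² (ρ₂ h₁² + ρ₁ h₂ (2 h₁ + h₂)) = 2 (ρ₂ - ρ₁) g h₂ h₁²`. Dividing by `ρ₂ (h₁ + h₂)²` and using
`h₁ / (h₁ + h₂) = 1 - α`, `(ρ₂ h₁² + ρ₁ h₂ (2 h₁ + h₂)) / (ρ₂ (h₁ + h₂)²) = 1 - δ α (2 - α)` turns it
into `S² (1 - δ α (2 - α)) = 2 δ g h₂ (1 - α)²`, which is the claimed Froude number once one
divides by `g δ h₂`; the right-hand side is nonzero, so `1 - δ α (2 - α)` is too.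
-/

namespace TwoLayerShock

variable {h₁ h₂ S ρ₁ ρ₂ g : ℝ}

theorem energy_balance_of_rankineHugoniot (hh₁ : h₁ ≠ 0)
    (hRH : S * (ρ₂ * S + ρ₁ * (h₂ / h₁) * S) =
      (1 / 2) * (ρ₂ * S ^ 2 - ρ₁ * (h₂ ^ 2 / h₁ ^ 2) * S ^ 2) + (ρ₂ - ρ₁) * g * h₂) :
    S ^ 2 * (ρ₂ * h₁ ^ 2 + ρ₁ * h₂ * (2 * h₁ + h₂)) = 2 * (ρ₂ - ρ₁) * g * h₂ * h₁ ^ 2 := by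
  field_simp at hRH
  linear_combination hRH

theorem sq_mul_one_sub_eq_of_rankineHugoniot (hh₁ : h₁ ≠ 0) (hH : h₁ + h₂ ≠ 0) (hρ₂ : ρ₂ ≠ 0)
    (hRH : S * (ρ₂ * S + ρ₁ * (h₂ / h₁) * S) =
      (1 / 2) * (ρ₂ * S ^ 2 - ρ₁ * (h₂ ^ 2 / h₁ ^ 2) * S ^ 2) + (ρ₂ - ρ₁) * g * h₂) :
    S ^ 2 * (1 - (ρ₂ - ρ₁) / ρ₂ * (h₂ / (h₁ + h₂)) * (2 - h₂ / (h₁ + h₂))) =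
      2 * ((ρ₂ - ρ₁) / ρ₂) * g * h₂ * (1 - h₂ / (h₁ + h₂)) ^ 2 := by
  have hE := energy_balance_of_rankineHugoniot hh₁ hRH
  field_simp
  linear_combination hE

end TwoLayerShock

open TwoLayerShock in
theorem froude_locally_conservative_2LSWE_general
    (h1l h2l S ρ1 ρ2 δ g α : ℝ)
    (hh1 : 0 < h1l) (hh2 : 0 < h2l)
    (hρ1 : 0 < ρ1) (hρ12 : ρ1 < ρ2)
    (hδ : δ = (ρ2 - ρ1) / ρ2) (hg : 0 < g)
    (hα : α = h2l / (h1l + h2l))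
    (hRH : S * (ρ2 * S + ρ1 * (h2l / h1l) * S) =
      (1 / 2) * (ρ2 * S ^ 2 - ρ1 * (h2l ^ 2 / h1l ^ 2) * S ^ 2)
        + (ρ2 - ρ1) * g * h2l) :
    S ^ 2 / (g * δ * h2l) = 2 * (1 - α) ^ 2 / (1 - δ * α * (2 - α)) := by
  have hρ2 : 0 < ρ2 := hρ1.trans hρ12
  have hδpos : 0 < δ := hδ ▸ div_pos (sub_pos.2 hρ12) hρ2
  have hα1 : 0 < 1 - α := by
    rw [hα, sub_pos, div_lt_one (by positivity)]
    linarith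
  have key : S ^ 2 * (1 - δ * α * (2 - α)) = 2 * δ * g * h2l * (1 - α) ^ 2 := by
    subst hδ hα
    exact sq_mul_one_sub_eq_of_rankineHugoniot hh1.ne' (by positivity) hρ2.ne' hRH
  have hden : 1 - δ * α * (2 - α) ≠ 0 := by
    refine right_ne_zero_of_mul (a := S ^ 2) ?_
    rw [key]
    positivity
  rw [div_eq_div_iff (by positivity) hden]
  linear_combination key

/-- Froude number at the leading edge from the locally conservative 2LSWE
with constant total height. -/
theorem froude_locally_conservative_2LSWE
    (h1l h2l u1l u2l S ρ1 ρ2 δ g α : ℝ)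
    (hh1 : 0 < h1l) (hh2 : 0 < h2l)
    (hρ1 : 0 < ρ1) (hρ12 : ρ1 < ρ2)
    (hδ : δ = (ρ2 - ρ1) / ρ2) (hg : 0 < g)
    (hmom : h1l * u1l + h2l * u2l = 0)
    (hS : S = u2l) (hS' : S = -(h1l / h2l) * u1l)
    (hα : α = h2l / (h1l + h2l))
    (hRH : S * (ρ2 * S + ρ1 * (h2l / h1l) * S) =
      (1 / 2) * (ρ2 * S ^ 2 - ρ1 * (h2l ^ 2 / h1l ^ 2) * S ^ 2)
        + (ρ2 - ρ1) * g * h2l) :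
    S ^ 2 / (g * δ * h2l) = 2 * (1 - α) ^ 2 / (1 - δ * α * (2 - α)) :=
  froude_locally_conservative_2LSWE_general h1l h2l S ρ1 ρ2 δ g α hh1 hh2 hρ1 hρ12 hδ hg hα hRH
end

section
/- For the locally conservative one-layer dam-break solution, the shock at x(t) = 2c_0 t/(1+√2) connects the plateau state (h_l, u_l) = (4h_0/(2+√2)², 2c_0/(1+√2)) to the dry state (h_r, u_r) = (0, 0), and satisfies the Rankine-Hugoniot conditions S[[h]] = [[hu]] and S[[u]] = [[u²/2 + δ g h]] with shock speed S = 2c_0/(1+√2), where c_0 = √(δ g h_0). -/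
/-!
Behind a shock running into a dry bed the fluid moves with the shock, `u_l = S`, so mass
conservation holds trivially and momentum conservation reduces to `S² = 2δg h_l`. For the
dam-break plateau this is the identity `(2 + √2)² = 2 (1 + √2)²`, i.e. `2 + √2 = √2 (1 + √2)`.
-/

def IsRankineHugoniotShock (δ g S hl ul hr ur : ℝ) : Prop :=
  S * (hr - hl) = hr * ur - hl * ul ∧
    S * (ur - ul) = (ur ^ 2 / 2 + δ * g * hr) - (ul ^ 2 / 2 + δ * g * hl)

theorem isRankineHugoniotShock_dry_right {δ g S hl : ℝ} (hS : S ^ 2 = 2 * δ * g * hl) :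
    IsRankineHugoniotShock δ g S hl S 0 0 := by
  unfold IsRankineHugoniotShock
  constructor
  · ring
  · linear_combination (-1 / 2 : ℝ) * hS

theorem two_add_sqrt_two_sq : (2 + √2) ^ 2 = 2 * (1 + √2) ^ 2 := by
  linear_combination -Real.sq_sqrt (zero_le_two : (0 : ℝ) ≤ 2)

theorem dam_break_shock_speed_sq {δ g h0 c0 : ℝ} (hc0 : c0 ^ 2 = δ * g * h0) :
    (2 * c0 / (1 + √2)) ^ 2 = 2 * δ * g * (4 * h0 / (2 + √2) ^ 2) := by
  have hpos : (0 : ℝ) < 1 + √2 := by positivity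
  rw [two_add_sqrt_two_sq]
  field_simp
  linear_combination 4 * hc0

theorem dam_break_shock_rankine_hugoniot_general
    (h0 δ g c0 hl ul hr ur S : ℝ)
    (hh0 : 0 < h0) (hδ0 : 0 < δ) (hg : 0 < g)
    (hc0 : c0 = Real.sqrt (δ * g * h0))
    (hhl : hl = 4 * h0 / (2 + Real.sqrt 2) ^ 2)
    (hul : ul = 2 * c0 / (1 + Real.sqrt 2))
    (hhr : hr = 0) (hur : ur = 0)
    (hS : S = 2 * c0 / (1 + Real.sqrt 2)) :
    S * (hr - hl) = hr * ur - hl * ul ∧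
    S * (ur - ul) = (ur ^ 2 / 2 + δ * g * hr) - (ul ^ 2 / 2 + δ * g * hl) := by
  have hc0_sq : c0 ^ 2 = δ * g * h0 := by
    rw [hc0, Real.sq_sqrt (by positivity)]
  subst hhl hul hhr hur hS
  exact isRankineHugoniotShock_dry_right (dam_break_shock_speed_sq hc0_sq)

/-- The leading-edge shock of the locally conservative dam-break solution satisfies
the Rankine-Hugoniot conditions with speed `S = 2c₀/(1+√2)`. -/
theorem dam_break_shock_rankine_hugoniot
    (h0 δ g c0 hl ul hr ur S : ℝ)
    (hh0 : 0 < h0) (hδ0 : 0 < δ) (hδ1 : δ ≤ 1) (hg : 0 < g)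
    (hc0 : c0 = Real.sqrt (δ * g * h0))
    (hhl : hl = 4 * h0 / (2 + Real.sqrt 2) ^ 2)
    (hul : ul = 2 * c0 / (1 + Real.sqrt 2))
    (hhr : hr = 0) (hur : ur = 0)
    (hS : S = 2 * c0 / (1 + Real.sqrt 2)) :
    S * (hr - hl) = hr * ur - hl * ul ∧
    S * (ur - ul) = (ur ^ 2 / 2 + δ * g * hr) - (ul ^ 2 / 2 + δ * g * hl) :=
  dam_break_shock_rankine_hugoniot_general h0 δ g c0 hl ul hr ur S hh0 hδ0 hg hc0 hhl hul hhr hur hS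
end

section
/- Given the jump condition [[ρ_1^{d-1} h_1 + ρ_2^{d-1} h_2]] = (ρ_2^{d-1}/g)·γ·[[h_d]]·(S - <u_d>)², the Rankine-Hugoniot condition for the shallow layer velocity S[[u_s]] = [[ (u_s)²/2 + g(ρ_1/ρ_2)^{s-1} h_1 + g h_2 ]] can be rewritten as S[[u_s]] = [[ (u_s)²/2 + δ g h_s ]] + (ρ_1/ρ_2)^{s-1} γ [[h_d]](S - <u_d>)², where δ = 1 - ρ_1/ρ_2, s ∈ {1,2}, d = 3 - s, and γ = 1/<h_d>. -/
/-!
With `r = ρ₁/ρ₂` and `X = γ [[h_d]] (S - ⟨u_d⟩)²`, the jump condition expresses `g [[h_d]]` through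
`X` and `[[h_s]]`; substituting it into the hydrostatic term `g r^{s-1} [[h₁]] + g [[h₂]]` of the
Rankine–Hugoniot condition leaves `δ g [[h_s]] + r^{s-1} X`.
-/

section HydrostaticJump

variable {ρ1 ρ2 g X a1 a2 : ℝ}

lemma hydrostatic_jump_eq_of_lower_deep (hρ2 : ρ2 ≠ 0) (hg : g ≠ 0)
    (h : ρ1 * a1 + ρ2 * a2 = ρ2 / g * X) :
    g * a1 + g * a2 = (1 - ρ1 / ρ2) * g * a1 + X := by
  linear_combination (norm := (field_simp; ring)) (g / ρ2) * h

lemma hydrostatic_jump_eq_of_upper_deep (hg : g ≠ 0) (h : a1 + a2 = 1 / g * X) :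
    g * (ρ1 / ρ2) * a1 + g * a2 = (1 - ρ1 / ρ2) * g * a2 + ρ1 / ρ2 * X := by
  linear_combination (norm := (field_simp; ring)) (ρ1 * g / ρ2) * h

end HydrostaticJump

lemma hydrostatic_jump_eq {s : ℕ} (hs : s = 1 ∨ s = 2) {ρ1 ρ2 g X : ℝ} (hρ2 : ρ2 ≠ 0)
    (hg : g ≠ 0) (a : ℕ → ℝ)
    (h : ρ1 ^ (2 - s) * a 1 + ρ2 ^ (2 - s) * a 2 = ρ2 ^ (2 - s) / g * X) :
    g * (ρ1 / ρ2) ^ (s - 1) * a 1 + g * a 2 = (1 - ρ1 / ρ2) * g * a s + (ρ1 / ρ2) ^ (s - 1) * X := by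
  rcases hs with rfl | rfl
  · simpa using hydrostatic_jump_eq_of_lower_deep hρ2 hg (by simpa using h)
  · simpa using hydrostatic_jump_eq_of_upper_deep hg (by simpa using h)

theorem shallow_layer_velocity_jump_rewrite_general
    (s d : ℕ) (hs : s = 1 ∨ s = 2) (hd : d = 3 - s)
    (ρ1 ρ2 g S δ γ : ℝ) (hρ1 : 0 < ρ1) (hρ12 : ρ1 < ρ2) (hg : 0 < g)
    (hδ : δ = 1 - ρ1 / ρ2)
    (hl hr ul ur : ℕ → ℝ)
    (hjump : (ρ1 ^ (d - 1) * hr 1 + ρ2 ^ (d - 1) * hr 2)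
        - (ρ1 ^ (d - 1) * hl 1 + ρ2 ^ (d - 1) * hl 2) =
      (ρ2 ^ (d - 1) / g) * γ * (hr d - hl d) * (S - (ul d + ur d) / 2) ^ 2)
    (hRHs : S * (ur s - ul s) =
      ((ur s) ^ 2 / 2 + g * (ρ1 / ρ2) ^ (s - 1) * hr 1 + g * hr 2)
        - ((ul s) ^ 2 / 2 + g * (ρ1 / ρ2) ^ (s - 1) * hl 1 + g * hl 2)) :
    S * (ur s - ul s) =
      (((ur s) ^ 2 / 2 + δ * g * hr s) - ((ul s) ^ 2 / 2 + δ * g * hl s))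
        + (ρ1 / ρ2) ^ (s - 1) * γ * (hr d - hl d)
          * (S - (ul d + ur d) / 2) ^ 2 := by
  have hρ2 : ρ2 ≠ 0 := (hρ1.trans hρ12).ne'
  have hd1 : d - 1 = 2 - s := by omega
  have hydrostatic := hydrostatic_jump_eq (ρ1 := ρ1)
    (X := γ * (hr d - hl d) * (S - (ul d + ur d) / 2) ^ 2) hs hρ2 hg.ne' (fun i => hr i - hl i)
    (by rw [← hd1]; linear_combination hjump)
  subst hδ
  linear_combination hRHs + hydrostatic

/-- Rewriting the shallow-layer velocity Rankine-Hugoniot condition using the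
deep-layer jump condition, with `δ = 1 - ρ₁/ρ₂`. -/
theorem shallow_layer_velocity_jump_rewrite
    (s d : ℕ) (hs : s = 1 ∨ s = 2) (hd : d = 3 - s)
    (ρ1 ρ2 g S δ γ : ℝ) (hρ1 : 0 < ρ1) (hρ12 : ρ1 < ρ2) (hg : 0 < g)
    (hδ : δ = 1 - ρ1 / ρ2)
    (hl hr ul ur : ℕ → ℝ)
    (havg : 0 < (hl d + hr d) / 2)
    (hγ : γ = 1 / ((hl d + hr d) / 2))
    (hjump : (ρ1 ^ (d - 1) * hr 1 + ρ2 ^ (d - 1) * hr 2)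
        - (ρ1 ^ (d - 1) * hl 1 + ρ2 ^ (d - 1) * hl 2) =
      (ρ2 ^ (d - 1) / g) * γ * (hr d - hl d) * (S - (ul d + ur d) / 2) ^ 2)
    (hRHs : S * (ur s - ul s) =
      ((ur s) ^ 2 / 2 + g * (ρ1 / ρ2) ^ (s - 1) * hr 1 + g * hr 2)
        - ((ul s) ^ 2 / 2 + g * (ρ1 / ρ2) ^ (s - 1) * hl 1 + g * hl 2)) :
    S * (ur s - ul s) =
      (((ur s) ^ 2 / 2 + δ * g * hr s) - ((ul s) ^ 2 / 2 + δ * g * hl s))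
        + (ρ1 / ρ2) ^ (s - 1) * γ * (hr d - hl d)
          * (S - (ul d + ur d) / 2) ^ 2 :=
  shallow_layer_velocity_jump_rewrite_general s d hs hd ρ1 ρ2 g S δ γ hρ1 hρ12 hg hδ hl hr ul ur
    hjump hRHs
end
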